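/- Let n = 2m ≥ 4 be an even integer and c_n = 2^{n-2}((n-2)/2)! π^{n/2}. Let u : ℝⁿ → ℝ be smooth with (-Δ)^m u = 2 Q e^{nu}, f := Q e^{nu} ∈ L¹(ℝⁿ), and suppose for every δ > 0 there is R_δ such that Q(x) ≥ e^{-δ|x|²} for |x| ≥ R_δ. Assume every ray from the origin has infinite length in the metric e^{2u}|dx|², i.e. ∫₀^∞ e^{u(rθ)} dr = +∞ for every unit vector θ. Let p = u + v be the polynomial of degree at most n-2, where v(x) = (1/c_n)∫_{ℝⁿ} log(|x-y|/|y|) f(y) dy. Then there is no unit vector θ ∈ S^{n-1}, integer k ≥ 2, and constant C > 0 such that lim_{r→∞} p(rθ)/r^k = C. -/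

import Mathlib

open MeasureTheory Real Filter Metric
open scoped ENNReal Topology

/-- The constant `c_n = 2^(n-2) * ((n-2)/2)! * pi^(n/2)`. -/
noncomputable def cconst (n : ℕ) : ℝ :=
  2 ^ (n - 2) * (Nat.factorial ((n - 2) / 2)) * Real.pi ^ (n / 2)

/-- The logarithmic potential `v x = (1/c_n) * ∫ log (|x-y|/|y|) f y dy`. -/
noncomputable def logPot (n : ℕ) (f : EuclideanSpace ℝ (Fin n) → ℝ)
    (x : EuclideanSpace ℝ (Fin n)) : ℝ :=
  (1 / cconst n) * ∫ y, Real.log (‖x - y‖ / ‖y‖) * f y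

/-- The Laplacian of `f : ℝ^n → ℝ`, as the trace of the second derivative. -/
noncomputable def laplacian {n : ℕ} (f : EuclideanSpace ℝ (Fin n) → ℝ)
    (x : EuclideanSpace ℝ (Fin n)) : ℝ :=
  ∑ i, iteratedFDeriv ℝ 2 f x ![EuclideanSpace.single i 1, EuclideanSpace.single i 1]

/-- The m-th iterate `(-Δ)^m` of the negative Laplacian. -/
noncomputable def negLapIter {n : ℕ} (m : ℕ) (f : EuclideanSpace ℝ (Fin n) → ℝ) :
    EuclideanSpace ℝ (Fin n) → ℝ :=
  (fun (g : EuclideanSpace ℝ (Fin n) → ℝ) x => -laplacian g x)^[m] f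


lemma abs_pow_sub_pow_le' {R a b : ℝ} (hR : 1 ≤ R) (ha : |a| ≤ R) (hb : |b| ≤ R) (d : ℕ) :
    |b ^ d - a ^ d| ≤ d * R ^ d * |b - a| := by
  have hR0 : (0:ℝ) ≤ R := le_trans zero_le_one hR
  induction d with
  | zero => simp
  | succ d ih =>
    have key : b ^ (d+1) - a ^ (d+1) = b * (b ^ d - a ^ d) + (b - a) * a ^ d := by ring
    have had : |a ^ d| ≤ R ^ d := by
      rw [abs_pow]; exact pow_le_pow_left₀ (abs_nonneg _) ha d
    have hpow : R ^ d ≤ R ^ (d+1) := pow_le_pow_right₀ hR (Nat.le_succ d)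
    have hRd : (0:ℝ) ≤ R ^ d := pow_nonneg hR0 d
    calc |b ^ (d+1) - a ^ (d+1)| ≤ |b * (b ^ d - a ^ d)| + |(b - a) * a ^ d| := by
          rw [key]; exact abs_add_le _ _
      _ = |b| * |b ^ d - a ^ d| + |b - a| * |a ^ d| := by rw [abs_mul, abs_mul]
      _ ≤ R * (d * R ^ d * |b - a|) + |b - a| * R ^ d := by
          gcongr
      _ ≤ ((d:ℝ)+1) * R ^ (d+1) * |b - a| := by
          have hps : R ^ (d+1) = R ^ d * R := pow_succ R d
          have h3 : |b - a| * R ^ d * 1 ≤ |b - a| * R ^ d * R :=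
            mul_le_mul_of_nonneg_left hR (mul_nonneg (abs_nonneg _) hRd)
          rw [hps]; nlinarith [h3]
      _ = ((d+1 : ℕ) : ℝ) * R ^ (d+1) * |b - a| := by push_cast; ring

lemma abs_prod_pow_sub_le {ι : Type*} [DecidableEq ι] (t : Finset ι) (s : ι → ℕ) (a b : ι → ℝ)
    {R : ℝ} (hR : 1 ≤ R) (ha : ∀ i, |a i| ≤ R) (hb : ∀ i, |b i| ≤ R) :
    |∏ i ∈ t, b i ^ s i - ∏ i ∈ t, a i ^ s i|
      ≤ R ^ (∑ i ∈ t, s i) * ∑ i ∈ t, (s i : ℝ) * |b i - a i| := by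
  have hR0 : (0:ℝ) ≤ R := le_trans zero_le_one hR
  induction t using Finset.induction_on with
  | empty => simp
  | @insert j t hj ih =>
    rw [Finset.prod_insert hj, Finset.prod_insert hj, Finset.sum_insert hj, Finset.sum_insert hj]
    have key : b j ^ s j * ∏ i ∈ t, b i ^ s i - a j ^ s j * ∏ i ∈ t, a i ^ s i
        = b j ^ s j * ((∏ i ∈ t, b i ^ s i) - ∏ i ∈ t, a i ^ s i)
          + (b j ^ s j - a j ^ s j) * ∏ i ∈ t, a i ^ s i := by ring
    have h1 : |b j ^ s j| ≤ R ^ s j := by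
      rw [abs_pow]; exact pow_le_pow_left₀ (abs_nonneg _) (hb j) _
    have h2 : |∏ i ∈ t, a i ^ s i| ≤ R ^ (∑ i ∈ t, s i) := by
      rw [Finset.abs_prod, ← Finset.prod_pow_eq_pow_sum]
      exact Finset.prod_le_prod (fun i _ => abs_nonneg _)
        (fun i _ => by rw [abs_pow]; exact pow_le_pow_left₀ (abs_nonneg _) (ha i) _)
    have h4 : |b j ^ s j - a j ^ s j| ≤ (s j : ℝ) * R ^ s j * |b j - a j| :=
      abs_pow_sub_pow_le' hR (ha j) (hb j) (s j)
    have hS : (0:ℝ) ≤ ∑ i ∈ t, (s i : ℝ) * |b i - a i| :=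
      Finset.sum_nonneg fun i _ => mul_nonneg (Nat.cast_nonneg _) (abs_nonneg _)
    calc |b j ^ s j * ∏ i ∈ t, b i ^ s i - a j ^ s j * ∏ i ∈ t, a i ^ s i|
        ≤ |b j ^ s j| * |(∏ i ∈ t, b i ^ s i) - ∏ i ∈ t, a i ^ s i|
          + |b j ^ s j - a j ^ s j| * |∏ i ∈ t, a i ^ s i| := by
          rw [key]; exact (abs_add_le _ _).trans (by rw [abs_mul, abs_mul])
      _ ≤ R ^ s j * (R ^ (∑ i ∈ t, s i) * ∑ i ∈ t, (s i : ℝ) * |b i - a i|)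
          + ((s j : ℝ) * R ^ s j * |b j - a j|) * R ^ (∑ i ∈ t, s i) := by
          gcongr
      _ = R ^ (s j + ∑ i ∈ t, s i) * ((s j : ℝ) * |b j - a j| + ∑ i ∈ t, (s i : ℝ) * |b i - a i|) := by
          rw [pow_add]; ring

lemma coord_abs_le_norm {n : ℕ} (v : EuclideanSpace ℝ (Fin n)) (i : Fin n) : |v i| ≤ ‖v‖ := by
  rw [EuclideanSpace.norm_eq]
  have h1 : |v i| = Real.sqrt (‖v i‖ ^ 2) := by
    rw [Real.sqrt_sq (norm_nonneg _)]; exact (Real.norm_eq_abs _).symm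
  rw [h1]
  exact Real.sqrt_le_sqrt (Finset.single_le_sum (fun j _ => sq_nonneg ‖v j‖) (Finset.mem_univ i))

lemma mv_lip {n : ℕ} (p : MvPolynomial (Fin n) ℝ) :
    ∃ K₀ : ℝ, 0 ≤ K₀ ∧ ∀ (R : ℝ), 1 ≤ R → ∀ x y : EuclideanSpace ℝ (Fin n), ‖x‖ ≤ R → ‖y‖ ≤ R →
      |MvPolynomial.eval (fun i => y i) p - MvPolynomial.eval (fun i => x i) p|
        ≤ K₀ * R ^ p.totalDegree * ‖y - x‖ := by
  classical
  set D := p.totalDegree with hD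
  refine ⟨(∑ s ∈ p.support, |MvPolynomial.coeff s p|) * (D * n), by positivity, ?_⟩
  intro R hR x y hx hy
  have hR0 : (0:ℝ) ≤ R := le_trans zero_le_one hR
  rw [MvPolynomial.eval_eq', MvPolynomial.eval_eq', ← Finset.sum_sub_distrib]
  have key : ∀ s ∈ p.support,
      |MvPolynomial.coeff s p * ∏ i, y i ^ s i - MvPolynomial.coeff s p * ∏ i, x i ^ s i|
        ≤ |MvPolynomial.coeff s p| * (R ^ D * ((D * n : ℕ) * ‖y - x‖)) := by
    intro s hs
    rw [← mul_sub, abs_mul]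
    refine mul_le_mul_of_nonneg_left ?_ (abs_nonneg _)
    have hsum_le : ∑ i, s i ≤ D := by
      have h1 : (s.sum fun _ e => e) ≤ D := MvPolynomial.le_totalDegree hs
      have h2 : (s.sum fun _ e => e) = ∑ i, s i := Finsupp.sum_fintype _ _ (fun _ => rfl)
      rw [h2] at h1; exact h1
    have hax : ∀ i, |x i| ≤ R := fun i => (coord_abs_le_norm x i).trans hx
    have hay : ∀ i, |y i| ≤ R := fun i => (coord_abs_le_norm y i).trans hy
    have h3 := abs_prod_pow_sub_le Finset.univ (fun i => s i) (fun i => x i) (fun i => y i) hR hax hay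
    refine h3.trans ?_
    have h4 : R ^ (∑ i, s i) ≤ R ^ D := pow_le_pow_right₀ hR hsum_le
    have h5 : ∑ i, (s i : ℝ) * |y i - x i| ≤ (D * n : ℕ) * ‖y - x‖ := by
      have h6 : ∀ i : Fin n, (s i : ℝ) * |y i - x i| ≤ (D : ℝ) * ‖y - x‖ := by
        intro i
        have hsi : s i ≤ D := le_trans (Finset.single_le_sum (f := fun i => s i) (fun _ _ => Nat.zero_le _) (Finset.mem_univ i)) hsum_le
        have hyx : |y i - x i| ≤ ‖y - x‖ := by
          have : (y - x) i = y i - x i := rfl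
          rw [← this]; exact coord_abs_le_norm _ i
        exact mul_le_mul (by exact_mod_cast hsi) hyx (abs_nonneg _) (Nat.cast_nonneg _)
      calc ∑ i, (s i : ℝ) * |y i - x i| ≤ ∑ _i : Fin n, (D : ℝ) * ‖y - x‖ :=
            Finset.sum_le_sum fun i _ => h6 i
        _ = (D * n : ℕ) * ‖y - x‖ := by
            rw [Finset.sum_const, Finset.card_univ, Fintype.card_fin]; push_cast; ring
    have hSnn : 0 ≤ ∑ i, (s i : ℝ) * |y i - x i| :=
      Finset.sum_nonneg fun i _ => mul_nonneg (Nat.cast_nonneg _) (abs_nonneg _)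
    exact mul_le_mul h4 h5 hSnn (pow_nonneg hR0 D)
  calc |∑ s ∈ p.support, (MvPolynomial.coeff s p * ∏ i, y i ^ s i - MvPolynomial.coeff s p * ∏ i, x i ^ s i)|
      ≤ ∑ s ∈ p.support, |MvPolynomial.coeff s p * ∏ i, y i ^ s i - MvPolynomial.coeff s p * ∏ i, x i ^ s i| :=
        Finset.abs_sum_le_sum_abs _ _
    _ ≤ ∑ s ∈ p.support, |MvPolynomial.coeff s p| * (R ^ D * ((D * n : ℕ) * ‖y - x‖)) :=
        Finset.sum_le_sum key
    _ = (∑ s ∈ p.support, |MvPolynomial.coeff s p|) * (D * n) * (R ^ D * ‖y - x‖) := by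
        rw [← Finset.sum_mul]; push_cast; ring
    _ = (∑ s ∈ p.support, |MvPolynomial.coeff s p|) * (D * n) * R ^ D * ‖y - x‖ := by ring

lemma cconst_pos (n : ℕ) : 0 < cconst n := by
  have := Real.pi_pos
  unfold cconst
  positivity

lemma logPot_bound {n : ℕ} (f : EuclideanSpace ℝ (Fin n) → ℝ) (hf : Integrable f)
    (R : ℝ) (hR : 1 ≤ R) (hneg : ∀ y, f y < 0 → ‖y‖ < R) :
    ∃ A B : ℝ, 0 ≤ A ∧ 0 ≤ B ∧ ∀ x : EuclideanSpace ℝ (Fin n), 2 * R ≤ ‖x‖ →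
      logPot n f x ≤ A + B * Real.log (1 + ‖x‖) := by
  have hc := cconst_pos n
  set fp : EuclideanSpace ℝ (Fin n) → ℝ := fun y => max (f y) 0 with hfp
  have hfp_int : Integrable fp := hf.pos_part
  set W : EuclideanSpace ℝ (Fin n) → ℝ := fun y => max 0 (-Real.log ‖y‖) * fp y with hWdef
  have hW_nonneg : ∀ y, 0 ≤ W y := fun y => mul_nonneg (le_max_left _ _) (le_max_right _ _)
  have hWm : AEStronglyMeasurable W volume := by
    refine (AEMeasurable.mul ?_ ?_).aestronglyMeasurable
    · exact (measurable_const.max (Real.measurable_log.comp measurable_norm).neg).aemeasurable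
    · exact hf.aemeasurable.max aemeasurable_const
  set I₁ : ℝ := ∫ y, fp y with hI₁def
  have hI₁ : 0 ≤ I₁ := integral_nonneg fun y => le_max_right _ _
  set K : ℝ := ∫ y, W y with hKdef
  have hK : 0 ≤ K := integral_nonneg hW_nonneg
  refine ⟨(1 / cconst n) * K, (1 / cconst n) * I₁,
    mul_nonneg (by positivity) hK, mul_nonneg (by positivity) hI₁, ?_⟩
  intro x hx
  have hxn : 2 ≤ ‖x‖ := by linarith
  have hlx : 0 ≤ Real.log (1 + ‖x‖) := Real.log_nonneg (by linarith [norm_nonneg x])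
  set g : EuclideanSpace ℝ (Fin n) → ℝ := fun y => Real.log (‖x - y‖ / ‖y‖) * f y with hgdef
  have hlogPot : logPot n f x = (1 / cconst n) * ∫ y, g y := rfl
  by_cases hgi : Integrable g
  · -- pointwise bound g ≤ h
    have hgh : ∀ y, g y ≤ Real.log (1 + ‖x‖) * fp y + W y := by
      intro y
      rcases le_or_gt 0 (f y) with hfy | hfy
      · have hfpy : fp y = f y := max_eq_left hfy
        have hlog : Real.log (‖x - y‖ / ‖y‖) ≤ Real.log (1 + ‖x‖) + max 0 (-Real.log ‖y‖) := by
          by_cases hy0 : y = 0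
          · subst hy0
            simp only [norm_zero, div_zero, Real.log_zero, neg_zero, max_self, add_zero]
            exact hlx
          by_cases hxy : x = y
          · subst hxy
            have h := le_max_left (0:ℝ) (-Real.log ‖x‖)
            simp only [sub_self, norm_zero, zero_div, Real.log_zero]
            linarith
          have hyn : 0 < ‖y‖ := norm_pos_iff.mpr hy0
          have hxyn : 0 < ‖x - y‖ := by
            rw [norm_pos_iff]; exact sub_ne_zero.mpr hxy
          rcases le_or_gt 1 ‖y‖ with hy1 | hy1
          · have hsub : ‖x - y‖ ≤ ‖x‖ + ‖y‖ := norm_sub_le _ _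
            have hratio : ‖x - y‖ / ‖y‖ ≤ 1 + ‖x‖ := by
              rw [div_le_iff₀ hyn]
              nlinarith [norm_nonneg x]
            have := Real.log_le_log (div_pos hxyn hyn) hratio
            linarith [le_max_left (0:ℝ) (-Real.log ‖y‖)]
          · rw [Real.log_div hxyn.ne' hyn.ne']
            have hsub : ‖x - y‖ ≤ ‖x‖ + ‖y‖ := norm_sub_le _ _
            have h1 : Real.log ‖x - y‖ ≤ Real.log (1 + ‖x‖) :=
              Real.log_le_log hxyn (by linarith)
            linarith [le_max_right (0:ℝ) (-Real.log ‖y‖)]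
        calc g y = Real.log (‖x - y‖ / ‖y‖) * f y := rfl
          _ ≤ (Real.log (1 + ‖x‖) + max 0 (-Real.log ‖y‖)) * f y :=
              mul_le_mul_of_nonneg_right hlog hfy
          _ = Real.log (1 + ‖x‖) * fp y + W y := by simp only [hWdef]; rw [hfpy]; ring
      · have hfpy : fp y = 0 := max_eq_right hfy.le
        have hlogn : 0 ≤ Real.log (‖x - y‖ / ‖y‖) := by
          by_cases hy0 : y = 0
          · subst hy0; simp
          have hyn : 0 < ‖y‖ := norm_pos_iff.mpr hy0
          have hyR : ‖y‖ < R := hneg y hfy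
          have hsub : ‖x‖ - ‖y‖ ≤ ‖x - y‖ := norm_sub_norm_le _ _
          have h1 : ‖y‖ ≤ ‖x - y‖ := by linarith
          exact Real.log_nonneg ((one_le_div hyn).mpr h1)
        have : g y ≤ 0 := mul_nonpos_of_nonneg_of_nonpos hlogn hfy.le
        have hWy : W y = 0 := by rw [hWdef]; simp only [hfpy, mul_zero]
        rw [hWy, hfpy]
        simpa using this
    -- W ≤ |g|
    have hW_le : ∀ y, W y ≤ |g y| := by
      intro y
      rcases le_or_gt 1 ‖y‖ with hy1 | hy1
      · have : max 0 (-Real.log ‖y‖) = 0 :=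
          max_eq_left (neg_nonpos.mpr (Real.log_nonneg hy1))
        rw [hWdef]; simp only [this, zero_mul]; exact abs_nonneg _
      rcases le_or_gt (f y) 0 with hfy | hfy
      · have : fp y = 0 := max_eq_right hfy
        rw [hWdef]; simp only [this, mul_zero]; exact abs_nonneg _
      by_cases hy0 : y = 0
      · subst hy0
        rw [hWdef]; simp only [norm_zero, Real.log_zero, neg_zero, max_self, zero_mul]
        exact abs_nonneg _
      have hyn : 0 < ‖y‖ := norm_pos_iff.mpr hy0
      have hsub : ‖x‖ - ‖y‖ ≤ ‖x - y‖ := norm_sub_norm_le _ _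
      have hxy1 : 1 ≤ ‖x - y‖ := by linarith
      have hlog1 : max 0 (-Real.log ‖y‖) ≤ Real.log (‖x - y‖ / ‖y‖) := by
        rw [Real.log_div (show (0:ℝ) < ‖x - y‖ by linarith).ne' hyn.ne']
        have h1 : 0 ≤ Real.log ‖x - y‖ := Real.log_nonneg hxy1
        have h2 : Real.log ‖y‖ ≤ 0 := Real.log_nonpos (norm_nonneg _) hy1.le
        exact max_le (by linarith) (by linarith)
      have hfpy : fp y = f y := max_eq_left hfy.le
      calc W y = max 0 (-Real.log ‖y‖) * f y := by simp only [hWdef, hfpy]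
        _ ≤ Real.log (‖x - y‖ / ‖y‖) * f y := mul_le_mul_of_nonneg_right hlog1 hfy.le
        _ ≤ |g y| := le_abs_self _
    have hW_int : Integrable W := by
      refine hgi.mono hWm (Filter.Eventually.of_forall fun y => ?_)
      rw [Real.norm_eq_abs, Real.norm_eq_abs, abs_of_nonneg (hW_nonneg y)]
      exact hW_le y
    have hint : Integrable (fun y => Real.log (1 + ‖x‖) * fp y + W y) :=
      (hfp_int.const_mul _).add hW_int
    have hgle : ∫ y, g y ≤ Real.log (1 + ‖x‖) * I₁ + K := by
      have h := integral_mono hgi hint hgh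
      rwa [integral_add (hfp_int.const_mul _) hW_int, integral_const_mul] at h
    rw [hlogPot]
    calc (1 / cconst n) * ∫ y, g y ≤ (1 / cconst n) * (Real.log (1 + ‖x‖) * I₁ + K) :=
          mul_le_mul_of_nonneg_left hgle (by positivity)
      _ = 1 / cconst n * K + 1 / cconst n * I₁ * Real.log (1 + ‖x‖) := by ring
  · rw [hlogPot, integral_undef hgi, mul_zero]
    have h1 : 0 ≤ 1 / cconst n * K := mul_nonneg (by positivity) hK
    have h2 : 0 ≤ 1 / cconst n * I₁ := mul_nonneg (by positivity) hI₁
    nlinarith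

set_option maxHeartbeats 1000000 in
/-- Under completeness of `e^{2u}|dx|²` along rays, the polynomial `p = u + v` cannot have
`p(rθ)/r^k → C > 0` for any direction `θ` and any `k ≥ 2`. -/
theorem stmt3 (m n : ℕ) (hm : 2 ≤ m) (hn : n = 2 * m)
    (u Q : EuclideanSpace ℝ (Fin n) → ℝ) (hu : ContDiff ℝ (⊤ : ℕ∞) u)
    (hPDE : ∀ x, negLapIter m u x = 2 * Q x * Real.exp (n * u x))
    (hf : MeasureTheory.Integrable (fun y => Q y * Real.exp (n * u y)))
    (hQ : ∀ δ > (0 : ℝ), ∃ Rδ : ℝ, ∀ x : EuclideanSpace ℝ (Fin n), Rδ ≤ ‖x‖ →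
      Real.exp (-δ * ‖x‖ ^ 2) ≤ Q x)
    (hcomplete : ∀ θ : EuclideanSpace ℝ (Fin n), ‖θ‖ = 1 →
      ∫⁻ r in Set.Ioi (0 : ℝ), ENNReal.ofReal (Real.exp (u (r • θ))) = ⊤)
    (p : MvPolynomial (Fin n) ℝ) (hdeg : p.totalDegree ≤ n - 2)
    (hupv : ∀ x : EuclideanSpace ℝ (Fin n),
      u x + logPot n (fun y => Q y * Real.exp (n * u y)) x
        = MvPolynomial.eval (fun i => x i) p) :
    ¬ ∃ (θ : EuclideanSpace ℝ (Fin n)) (k : ℕ) (C : ℝ), ‖θ‖ = 1 ∧ 2 ≤ k ∧ 0 < C ∧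
      Filter.Tendsto (fun r : ℝ => MvPolynomial.eval (fun i => (r • θ) i) p / r ^ k)
        Filter.atTop (nhds C) := by
  rintro ⟨θ, k, C, hθ, hk2, hC, hlim⟩
  classical
  set f : EuclideanSpace ℝ (Fin n) → ℝ := fun y => Q y * Real.exp (n * u y) with hfdef
  have hnn : (0:ℝ) ≤ (n:ℝ) := Nat.cast_nonneg n
  have hnpos : (0:ℝ) < (n:ℝ) := by
    have : 0 < n := by omega
    exact_mod_cast this
  obtain ⟨R₁, hR₁⟩ := hQ 1 one_pos
  set R : ℝ := max R₁ 1 with hRdef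
  have hR1 : (1:ℝ) ≤ R := le_max_right _ _
  have hfneg : ∀ y, f y < 0 → ‖y‖ < R := by
    intro y hy
    by_contra h
    push_neg at h
    have h1 : R₁ ≤ ‖y‖ := le_trans (le_max_left _ _) h
    have h2 : 0 < Q y := lt_of_lt_of_le (Real.exp_pos _) (hR₁ y h1)
    have : 0 < f y := mul_pos h2 (Real.exp_pos _)
    linarith
  obtain ⟨A, B, hA, hB, hv⟩ := logPot_bound f hf R hR1 hfneg
  have hδpos : 0 < (n:ℝ) * C / 16 := by positivity
  obtain ⟨Rδ, hRδ⟩ := hQ ((n:ℝ) * C / 16) hδpos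
  obtain ⟨K₀, hK₀, hlip⟩ := mv_lip p
  set D := p.totalDegree with hDdef
  have hJint : Integrable (fun y => |f y|) := hf.abs
  set J : ℝ := ∫ y, |f y| with hJdef
  have hJ : 0 ≤ J := integral_nonneg fun y => abs_nonneg _
  set ω : ℝ := (volume (Metric.closedBall (0 : EuclideanSpace ℝ (Fin n)) 1)).toReal with hωdef
  have hω : 0 < ω := ENNReal.toReal_pos
    (Metric.measure_closedBall_pos _ _ one_pos).ne' measure_closedBall_lt_top.ne
  set T : ℝ := Real.log ((J + 1) / ω) with hTdef
  set aa : ℝ := (n:ℝ) * C / 4 with haadef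
  set bb : ℝ := (n:ℝ) * (B + 1) with hbbdef
  set cc : ℝ := (n:ℝ) * (1 + A + 2 * B) with hccdef
  have haapos : 0 < aa := by rw [haadef]; positivity
  -- eventual statements
  have ev1 : ∀ᶠ r : ℝ in atTop, C / 2 * r ^ k ≤ MvPolynomial.eval (fun i => (r • θ) i) p := by
    have h0 : ∀ᶠ r : ℝ in atTop,
        C / 2 < MvPolynomial.eval (fun i => (r • θ) i) p / r ^ k :=
      hlim.eventually_const_lt (by linarith)
    filter_upwards [h0, eventually_ge_atTop (1:ℝ)] with r h1 h2
    have hrk : (0:ℝ) < r ^ k := pow_pos (by linarith) k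
    have h3 := (lt_div_iff₀ hrk).mp h1
    linarith
  have ev2 : ∀ᶠ r : ℝ in atTop, K₀ * (r + 2) ^ D * Real.exp (-r) ≤ 1 := by
    have t0 : Tendsto (fun r : ℝ => (r + 2) ^ D * Real.exp (-(r + 2))) atTop (𝓝 0) :=
      (tendsto_pow_mul_exp_neg_atTop_nhds_zero D).comp
        (tendsto_atTop_add_const_right atTop 2 tendsto_id)
    have t2 := t0.const_mul (K₀ * Real.exp 2)
    rw [mul_zero] at t2
    have t1 : Tendsto (fun r : ℝ => K₀ * (r + 2) ^ D * Real.exp (-r)) atTop (𝓝 0) := by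
      refine t2.congr fun r => ?_
      rw [show -(r + 2) = -2 + -r by ring, Real.exp_add, Real.exp_neg (2:ℝ)]
      field_simp
    exact t1.eventually_le_const one_pos
  have ev3 : ∀ᶠ r : ℝ in atTop, T ≤ aa * r ^ 2 - bb * r - cc := by
    have h1 : Tendsto (fun r : ℝ => aa * r) atTop atTop :=
      (tendsto_const_mul_atTop_of_pos haapos).mpr tendsto_id
    have h2 : Tendsto (fun r : ℝ => aa * r + -bb) atTop atTop :=
      tendsto_atTop_add_const_right _ _ h1
    have h3 : Tendsto (fun r : ℝ => r * (aa * r + -bb)) atTop atTop :=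
      tendsto_id.atTop_mul_atTop₀ h2
    have h4 : Tendsto (fun r : ℝ => r * (aa * r + -bb) + -cc) atTop atTop :=
      tendsto_atTop_add_const_right _ _ h3
    have h5 : Tendsto (fun r : ℝ => aa * r ^ 2 - bb * r - cc) atTop atTop :=
      h4.congr fun r => by ring
    exact h5.eventually_ge_atTop T
  obtain ⟨r, hPc, hLip1, hquad, hr1, hr2R, hrRδ⟩ :=
    (ev1.and (ev2.and (ev3.and ((eventually_ge_atTop (1:ℝ)).and
      ((eventually_ge_atTop (2 * R + 1)).and (eventually_ge_atTop (Rδ + 1))))))).exists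
  set ρ : ℝ := Real.exp (-r) with hρdef
  have hρpos : 0 < ρ := Real.exp_pos _
  have hρ1 : ρ ≤ 1 := by
    rw [hρdef]
    have h := Real.exp_le_exp.mpr (show -r ≤ 0 by linarith)
    rwa [Real.exp_zero] at h
  set cpt : EuclideanSpace ℝ (Fin n) := r • θ with hcpt
  have hcnorm : ‖cpt‖ = r := by
    rw [hcpt, norm_smul, hθ, mul_one, Real.norm_eq_abs, abs_of_nonneg (by linarith)]
  have hflow : ∀ y ∈ Metric.closedBall cpt ρ,
      Real.exp (-((n:ℝ) * C / 16) * (r + 1) ^ 2) *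
        Real.exp ((n:ℝ) * (C / 2 * r ^ k - 1 - A - B * Real.log (2 + r))) ≤ f y := by
    intro y hy
    rw [Metric.mem_closedBall, dist_eq_norm] at hy
    have hyle : ‖y‖ ≤ r + 1 := by
      have h := norm_sub_norm_le y cpt
      rw [hcnorm] at h
      linarith
    have hyge : r - 1 ≤ ‖y‖ := by
      have h := norm_sub_norm_le cpt y
      rw [hcnorm, norm_sub_rev] at h
      linarith
    have hR' : (1:ℝ) ≤ r + 2 := by linarith
    have hdiff := hlip (r + 2) hR' cpt y (by rw [hcnorm]; linarith) (by linarith)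
    have hdiff1 : |MvPolynomial.eval (fun i => y i) p - MvPolynomial.eval (fun i => cpt i) p|
        ≤ 1 := by
      refine le_trans (le_trans hdiff ?_) hLip1
      have : K₀ * (r + 2) ^ D * ‖y - cpt‖ ≤ K₀ * (r + 2) ^ D * ρ :=
        mul_le_mul_of_nonneg_left hy (by positivity)
      rw [hρdef] at this
      exact this
    have hPy : C / 2 * r ^ k - 1 ≤ MvPolynomial.eval (fun i => y i) p := by
      have h := (abs_le.mp hdiff1).1
      linarith
    have hvy : logPot n f y ≤ A + B * Real.log (2 + r) := by
      have h1 := hv y (by linarith)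
      have h2 : Real.log (1 + ‖y‖) ≤ Real.log (2 + r) :=
        Real.log_le_log (by positivity) (by linarith)
      have h3 := mul_le_mul_of_nonneg_left h2 hB
      linarith
    have hu_eq := hupv y
    have huy : C / 2 * r ^ k - 1 - A - B * Real.log (2 + r) ≤ u y := by linarith
    have hQy : Real.exp (-((n:ℝ) * C / 16) * ‖y‖ ^ 2) ≤ Q y := hRδ y (by linarith)
    have hf1 : Real.exp (-((n:ℝ) * C / 16) * (r + 1) ^ 2)
        ≤ Real.exp (-((n:ℝ) * C / 16) * ‖y‖ ^ 2) := by
      apply Real.exp_le_exp.mpr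
      have hsq : ‖y‖ ^ 2 ≤ (r + 1) ^ 2 := by nlinarith [norm_nonneg y]
      nlinarith [hδpos]
    have hf2 : Real.exp ((n:ℝ) * (C / 2 * r ^ k - 1 - A - B * Real.log (2 + r)))
        ≤ Real.exp ((n:ℝ) * u y) :=
      Real.exp_le_exp.mpr (mul_le_mul_of_nonneg_left huy hnn)
    have hQpos : 0 ≤ Q y := le_trans (Real.exp_pos _).le hQy
    exact mul_le_mul (hf1.trans hQy) hf2 (Real.exp_pos _).le hQpos
  have hmeas : MeasurableSet (Metric.closedBall cpt ρ) := measurableSet_closedBall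
  have hμne : volume (Metric.closedBall cpt ρ) ≠ ⊤ := measure_closedBall_lt_top.ne
  have hint1 := setIntegral_ge_of_const_le hmeas hμne hflow hf.integrableOn
  have hμval : (volume (Metric.closedBall cpt ρ)).toReal = ρ ^ n * ω := by
    rw [Measure.addHaar_closedBall' _ _ hρpos.le, finrank_euclideanSpace_fin,
      ENNReal.toReal_mul, ENNReal.toReal_ofReal (by positivity)]
  have hup : ∫ y in Metric.closedBall cpt ρ, f y ≤ J := by
    calc ∫ y in Metric.closedBall cpt ρ, f y
        ≤ ∫ y in Metric.closedBall cpt ρ, |f y| :=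
          setIntegral_mono hf.integrableOn hJint.integrableOn fun y => le_abs_self _
      _ ≤ J := setIntegral_le_integral hJint (Filter.Eventually.of_forall fun y => abs_nonneg _)
  have hGlow : T ≤ -((n:ℝ) * C / 16) * (r + 1) ^ 2
      + (n:ℝ) * (C / 2 * r ^ k - 1 - A - B * Real.log (2 + r)) + (n:ℝ) * (-r) := by
    have hlog2r : Real.log (2 + r) ≤ 2 + r := Real.log_le_self (by linarith)
    have hrk2 : r ^ 2 ≤ r ^ k := pow_le_pow_right₀ (by linarith) hk2
    have h1 : (n:ℝ) * C / 2 * r ^ 2 ≤ (n:ℝ) * C / 2 * r ^ k :=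
      mul_le_mul_of_nonneg_left hrk2 (by positivity)
    have h2 : (n:ℝ) * B * Real.log (2 + r) ≤ (n:ℝ) * B * (2 + r) :=
      mul_le_mul_of_nonneg_left hlog2r (by positivity)
    have h3 : ((n:ℝ) * C / 16) * (r + 1) ^ 2 ≤ ((n:ℝ) * C / 16) * (4 * r ^ 2) :=
      mul_le_mul_of_nonneg_left (by nlinarith) (by positivity)
    rw [haadef, hbbdef, hccdef] at hquad
    nlinarith [hquad]
  have hfinal : J + 1 ≤ (Real.exp (-((n:ℝ) * C / 16) * (r + 1) ^ 2) *
      Real.exp ((n:ℝ) * (C / 2 * r ^ k - 1 - A - B * Real.log (2 + r)))) * (ρ ^ n * ω) := by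
    have e1 : ρ ^ n = Real.exp ((n:ℝ) * (-r)) := by
      rw [hρdef]; exact (Real.exp_nat_mul (-r) n).symm
    have e2 : (Real.exp (-((n:ℝ) * C / 16) * (r + 1) ^ 2) *
        Real.exp ((n:ℝ) * (C / 2 * r ^ k - 1 - A - B * Real.log (2 + r)))) * (ρ ^ n * ω)
        = Real.exp ((-((n:ℝ) * C / 16) * (r + 1) ^ 2
            + (n:ℝ) * (C / 2 * r ^ k - 1 - A - B * Real.log (2 + r))) + (n:ℝ) * (-r)) * ω := by
      rw [e1, Real.exp_add, Real.exp_add]; ring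
    rw [e2]
    have hexp : (J + 1) / ω ≤ Real.exp ((-((n:ℝ) * C / 16) * (r + 1) ^ 2
        + (n:ℝ) * (C / 2 * r ^ k - 1 - A - B * Real.log (2 + r))) + (n:ℝ) * (-r)) := by
      rw [← Real.exp_log (show 0 < (J + 1) / ω by positivity)]
      apply Real.exp_le_exp.mpr
      rw [← hTdef]
      linarith
    calc J + 1 = ((J + 1) / ω) * ω := by field_simp
      _ ≤ _ := mul_le_mul_of_nonneg_right hexp hω.le
  rw [measureReal_def, hμval, smul_eq_mul] at hint1
  linarith
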